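/- arXiv:2509.03886 — 2 statements merged into one kernel-verified Lean document; each statement's English description precedes it below -/
import Mathlib

section
/- Let B, E ∈ ℝ³ with r₁ = EᵀE − BᵀB and r₂ = −EᵀB, and let F be the associated 4×4 complex matrix. Define real sequences by a₂ = 0, b₂ = 1, and for k ≥ 1: a_{2k+2} = r₂²·b_{2k}, b_{2k+2} = a_{2k} + r₁·b_{2k}. Then for every k ≥ 1, the even matrix power satisfies F^{2k} = a_{2k}·I₄ + b_{2k}·F². -/
/-!
`F²` satisfies the quadratic relation `(F²)² = r₂² I + r₁ F²`: multiplying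
`F³ = r₁ F + r₂ F̂` by `F` and using `F F̂ = r₂ I` gives it. Hence every power of `F²` lies in
the span of `I` and `F²`, and multiplying `F^{2k} = a_{2k} I + b_{2k} F²` by `F²` and reducing
`(F²)²` reproduces exactly the recurrence defining `a` and `b`.
-/

open Matrix

/-- The 4×4 complex field matrix `F = [[B̃, −iE],[iEᵀ, 0]]`, where `B̃α = α × B`. -/
noncomputable def Fmat (B E : Fin 3 → ℝ) : Matrix (Fin 4) (Fin 4) ℂ :=
  !![0, (B 2 : ℂ), -(B 1 : ℂ), -Complex.I * (E 0 : ℂ);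
     -(B 2 : ℂ), 0, (B 0 : ℂ), -Complex.I * (E 1 : ℂ);
     (B 1 : ℂ), -(B 0 : ℂ), 0, -Complex.I * (E 2 : ℂ);
     Complex.I * (E 0 : ℂ), Complex.I * (E 1 : ℂ), Complex.I * (E 2 : ℂ), 0]

section QuadraticRelation

variable {R A : Type*} [CommRing R] [Ring A] [Algebra R A]

theorem pow_eq_smul_one_add_smul_of_sq_eq {Y : A} {p q : R} (hY : Y ^ 2 = p • 1 + q • Y)
    {a b : ℕ → R} (ha1 : a 1 = 0) (hb1 : b 1 = 1)
    (ha : ∀ k, 1 ≤ k → a (k + 1) = p * b k) (hb : ∀ k, 1 ≤ k → b (k + 1) = a k + q * b k) :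
    ∀ k, 1 ≤ k → Y ^ k = a k • 1 + b k • Y := by
  intro k hk
  induction k, hk using Nat.le_induction with
  | base => simp [ha1, hb1]
  | succ k hk ih =>
    calc Y ^ (k + 1) = a k • Y + b k • Y ^ 2 := by
          rw [pow_succ, ih, add_mul, smul_mul_assoc, smul_mul_assoc, one_mul, sq]
      _ = a (k + 1) • 1 + b (k + 1) • Y := by
          rw [hY, ha k hk, hb k hk]
          module

end QuadraticRelation

section FieldMatrix

/-- `F̂ = [[Ẽ, iB],[−iBᵀ, 0]]`, where `Ẽα = α × E`. -/
noncomputable def Fhat (B E : Fin 3 → ℝ) : Matrix (Fin 4) (Fin 4) ℂ :=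
  !![0, (E 2 : ℂ), -(E 1 : ℂ), Complex.I * (B 0 : ℂ);
     -(E 2 : ℂ), 0, (E 0 : ℂ), Complex.I * (B 1 : ℂ);
     (E 1 : ℂ), -(E 0 : ℂ), 0, Complex.I * (B 2 : ℂ);
     -Complex.I * (B 0 : ℂ), -Complex.I * (B 1 : ℂ), -Complex.I * (B 2 : ℂ), 0]

variable (B E : Fin 3 → ℝ)

theorem Fmat_mul_Fhat : Fmat B E * Fhat B E = ((-(E ⬝ᵥ B) : ℝ) : ℂ) • 1 := by
  ext i j
  fin_cases i <;> fin_cases j <;>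
    simp [Fmat, Fhat, mul_apply, Fin.sum_univ_four, dotProduct, Fin.sum_univ_three,
      one_apply, Complex.ext_iff] <;>
    ring

theorem Fmat_pow_three :
    Fmat B E ^ 3 =
      ((E ⬝ᵥ E - B ⬝ᵥ B : ℝ) : ℂ) • Fmat B E + ((-(E ⬝ᵥ B) : ℝ) : ℂ) • Fhat B E := by
  ext i j
  fin_cases i <;> fin_cases j <;>
    simp [pow_succ, Fmat, Fhat, mul_apply, Fin.sum_univ_four, dotProduct,
      Fin.sum_univ_three, Complex.ext_iff] <;>
    ring

theorem Fmat_sq_sq :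
    (Fmat B E ^ 2) ^ 2 =
      ((-(E ⬝ᵥ B) : ℝ) : ℂ) ^ 2 • 1 + ((E ⬝ᵥ E - B ⬝ᵥ B : ℝ) : ℂ) • Fmat B E ^ 2 := by
  calc (Fmat B E ^ 2) ^ 2 = Fmat B E * Fmat B E ^ 3 := by
        rw [← pow_mul, ← pow_succ']
    _ = _ := by
        rw [Fmat_pow_three, mul_add, mul_smul_comm, mul_smul_comm, Fmat_mul_Fhat, ← sq]
        module

end FieldMatrix

/-- Even powers of `F`: `F^{2k} = a_{2k} I + b_{2k} F²`. -/
theorem even_powers_F (B E : Fin 3 → ℝ) (r₁ r₂ : ℝ)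
    (hr₁ : r₁ = E ⬝ᵥ E - B ⬝ᵥ B) (hr₂ : r₂ = -(E ⬝ᵥ B))
    (a b : ℕ → ℝ) (ha2 : a 2 = 0) (hb2 : b 2 = 1)
    (ha : ∀ k, 1 ≤ k → a (2 * k + 2) = r₂ ^ 2 * b (2 * k))
    (hb : ∀ k, 1 ≤ k → b (2 * k + 2) = a (2 * k) + r₁ * b (2 * k)) :
    ∀ k, 1 ≤ k →
      Fmat B E ^ (2 * k) =
        (a (2 * k) : ℂ) • (1 : Matrix (Fin 4) (Fin 4) ℂ) +
          (b (2 * k) : ℂ) • Fmat B E ^ 2 := by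
  intro k hk
  subst hr₁ hr₂
  rw [pow_mul]
  exact pow_eq_smul_one_add_smul_of_sq_eq (Fmat_sq_sq B E) (a := fun k ↦ (a (2 * k) : ℂ))
    (b := fun k ↦ (b (2 * k) : ℂ)) (by simp [ha2]) (by simp [hb2])
    (fun k hk ↦ by simp [mul_add, ha k hk]) (fun k hk ↦ by simp [mul_add, hb k hk]) k hk
end

section
/- (Total-derivative lemma for odd-sum derivative products.) Let n ≥ 1, let k ≥ 0 and m ≥ 0 be integers, set l = k + 2m + 1, and let f : ℝ → ℝⁿ be l-times continuously differentiable. Define G(t) = Σ_{j=0}^{m−1} (−1)^j · f^{(k+j)}(t) · f^{(l−1−j)}(t) + (−1)^m · (1/2) · f^{(k+m)}(t) · f^{(k+m)}(t), where · is the Euclidean inner product and f^{(j)} the j-th derivative. Then G is differentiable and G′(t) = f^{(k)}(t) · f^{(l)}(t) for all t ∈ ℝ; i.e. whenever k + l is odd, the scalar product f^{(k)}·f^{(l)} is a total derivative. -/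
open Matrix

/-! Differentiating `f^{(k+j)} · f^{(l-1-j)}` produces `f^{(k+j+1)} · f^{(l-1-j)} + f^{(k+j)} · f^{(l-j)}`,
so with alternating signs the sum over `j < m` telescopes to `f^{(k)} · f^{(l)}` minus the boundary term
`± f^{(k+m)} · f^{(l-m)}`. Since `l - m = k + m + 1`, that boundary term is the derivative of
`± ½ f^{(k+m)} · f^{(k+m)}`. -/

section DotProduct

variable {𝕜 : Type*} [NontriviallyNormedField 𝕜] {ι : Type*} [Fintype ι]
  {g h : 𝕜 → ι → 𝕜} {g' h' : ι → 𝕜} {t : 𝕜}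

theorem HasDerivAt.dotProduct (hg : HasDerivAt g g' t) (hh : HasDerivAt h h' t) :
    HasDerivAt (fun s => g s ⬝ᵥ h s) (g' ⬝ᵥ h t + g t ⬝ᵥ h') t := by
  unfold _root_.dotProduct
  rw [← Finset.sum_add_distrib]
  exact HasDerivAt.fun_sum fun i _ => (hasDerivAt_pi.mp hg i).mul (hasDerivAt_pi.mp hh i)

theorem HasDerivAt.dotProduct_self (hg : HasDerivAt g g' t) :
    HasDerivAt (fun s => g s ⬝ᵥ g s) (2 * (g t ⬝ᵥ g')) t :=
  (hg.dotProduct hg).congr_deriv (by rw [dotProduct_comm g', two_mul])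

end DotProduct

theorem ContDiff.hasDerivAt_iteratedDeriv {𝕜 F : Type*} [NontriviallyNormedField 𝕜]
    [NormedAddCommGroup F] [NormedSpace 𝕜 F] {f : 𝕜 → F} {N i : ℕ} (hf : ContDiff 𝕜 N f)
    (hi : i < N) (t : 𝕜) : HasDerivAt (iteratedDeriv i f) (iteratedDeriv (i + 1) f t) t := by
  rw [iteratedDeriv_succ]
  exact (hf.differentiable_iteratedDeriv i (by exact_mod_cast hi) t).hasDerivAt

theorem Finset.sum_range_alternating_pairing_telescope {R : Type*} [CommRing R]
    (p : ℕ → ℕ → R) {k l m : ℕ} (hm : m ≤ l) :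
    ∑ j ∈ range m, (-1) ^ j * (p (k + j + 1) (l - 1 - j) + p (k + j) (l - 1 - j + 1)) =
      p k l - (-1) ^ m * p (k + m) (l - m) := by
  set S : ℕ → R := fun j => (-1) ^ j * p (k + j) (l - j)
  have hstep : ∀ j ∈ range m,
      (-1) ^ j * (p (k + j + 1) (l - 1 - j) + p (k + j) (l - 1 - j + 1)) = S j - S (j + 1) := by
    intro j hj
    have hj : j < m := mem_range.mp hj
    simp only [S, ← add_assoc, pow_succ]
    rw [show l - 1 - j + 1 = l - j by omega, show l - (j + 1) = l - 1 - j by omega]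
    ring
  rw [sum_congr rfl hstep, sum_range_sub']
  simp only [S, pow_zero, one_mul, add_zero, Nat.sub_zero]

theorem odd_sum_total_derivative_general (n : ℕ) (k m l : ℕ)
    (hl : l = k + 2 * m + 1)
    (f : ℝ → (Fin n → ℝ)) (hf : ContDiff ℝ (l : ℕ) f)
    (G : ℝ → ℝ)
    (hG : ∀ t, G t =
      (∑ j ∈ Finset.range m, (-1 : ℝ) ^ j *
        (iteratedDeriv (k + j) f t ⬝ᵥ iteratedDeriv (l - 1 - j) f t)) +
      (-1 : ℝ) ^ m * (1 / 2) *
        (iteratedDeriv (k + m) f t ⬝ᵥ iteratedDeriv (k + m) f t)) :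
    ∀ t, HasDerivAt G (iteratedDeriv k f t ⬝ᵥ iteratedDeriv l f t) t := by
  intro t
  have hD : ∀ i < l, HasDerivAt (iteratedDeriv i f) (iteratedDeriv (i + 1) f t) t :=
    fun i hi => hf.hasDerivAt_iteratedDeriv hi t
  have hsum := HasDerivAt.fun_sum (u := Finset.range m) fun j hj =>
    ((hD (k + j) (by rw [Finset.mem_range] at hj; omega)).dotProduct (hD (l - 1 - j) (by omega))).const_mul
      ((-1 : ℝ) ^ j)
  have hlast := (hD (k + m) (by omega)).dotProduct_self.const_mul ((-1 : ℝ) ^ m * (1 / 2))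
  rw [show G = _ from funext hG]
  refine (hsum.add hlast).congr_deriv ?_
  rw [Finset.sum_range_alternating_pairing_telescope
    (fun i j => iteratedDeriv i f t ⬝ᵥ iteratedDeriv j f t) (by omega), show l - m = k + m + 1 by omega]
  ring

/-- Total-derivative lemma for odd-sum derivative products: with
`l = k + 2m + 1`, the scalar product `f^{(k)}·f^{(l)}` is the derivative of
`Σ_{j<m} (−1)^j f^{(k+j)}·f^{(l−1−j)} + (−1)^m (1/2) f^{(k+m)}·f^{(k+m)}`. -/
theorem odd_sum_total_derivative (n : ℕ) (hn : 1 ≤ n) (k m l : ℕ)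
    (hl : l = k + 2 * m + 1)
    (f : ℝ → (Fin n → ℝ)) (hf : ContDiff ℝ (l : ℕ) f)
    (G : ℝ → ℝ)
    (hG : ∀ t, G t =
      (∑ j ∈ Finset.range m, (-1 : ℝ) ^ j *
        (iteratedDeriv (k + j) f t ⬝ᵥ iteratedDeriv (l - 1 - j) f t)) +
      (-1 : ℝ) ^ m * (1 / 2) *
        (iteratedDeriv (k + m) f t ⬝ᵥ iteratedDeriv (k + m) f t)) :
    ∀ t, HasDerivAt G (iteratedDeriv k f t ⬝ᵥ iteratedDeriv l f t) t :=
  odd_sum_total_derivative_general n k m l hl f hf G hG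
end
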